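/- Let F be a convex class of probability measures on Ω and let T : F → A ⊆ ℝ^k be linear (i.e., T((1−λ)F + λG) = (1−λ)T(F) + λT(G) for all F, G ∈ F and λ ∈ [0,1]) and surjective onto A. Then any strictly F-consistent scoring function S : A × Ω → ℝ for T is strictly F-order-sensitive on line segments for T. -/

import Mathlib

open MeasureTheory ENNReal

noncomputable def escore {α Ω : Type*} [MeasurableSpace Ω]
    (S : α → Ω → ℝ) (x : α) (F : Measure Ω) : ℝ :=
  ∫ y, S x y ∂F

/-- The mixture `(1 - lam) • F + lam • G` of two measures. -/
noncomputable def mix {Ω : Type*} [MeasurableSpace Ω]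
    (F G : Measure Ω) (lam : ℝ) : Measure Ω :=
  ENNReal.ofReal (1 - lam) • F + ENNReal.ofReal lam • G

/-- The class `𝓕` is convex (closed under mixtures). -/
def MixConvex {Ω : Type*} [MeasurableSpace Ω] (𝓕 : Set (Measure Ω)) : Prop :=
  ∀ F ∈ 𝓕, ∀ G ∈ 𝓕, ∀ lam ∈ Set.Icc (0:ℝ) 1, mix F G lam ∈ 𝓕

/-- `S` is an `𝓕`-consistent scoring function for `T` on the action domain `A`. -/
def Consistent {α Ω : Type*} [MeasurableSpace Ω]
    (𝓕 : Set (Measure Ω)) (A : Set α) (T : Measure Ω → α) (S : α → Ω → ℝ) : Prop :=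
  ∀ F ∈ 𝓕, ∀ x ∈ A, escore S (T F) F ≤ escore S x F

/-- `S` is a strictly `𝓕`-consistent scoring function for `T` on the action domain `A`. -/
def StrictlyConsistent {α Ω : Type*} [MeasurableSpace Ω]
    (𝓕 : Set (Measure Ω)) (A : Set α) (T : Measure Ω → α) (S : α → Ω → ℝ) : Prop :=
  Consistent 𝓕 A T S ∧
    ∀ F ∈ 𝓕, ∀ x ∈ A, escore S x F = escore S (T F) F → x = T F

/-- The `ℓ^p`-norm on `ℝ^k`, for `p ∈ [1, ∞]` (given as an extended real). -/
noncomputable def lpNorm {k : ℕ} (p : ℝ≥0∞) (x : Fin k → ℝ) : ℝ :=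
  if p = ⊤ then ⨆ i, |x i| else (∑ i, |x i| ^ p.toReal) ^ (1 / p.toReal)

/-- `S` is metrically `𝓕`-order-sensitive for `T` relative to the norm `nrm`. -/
def MetricallyOS {α Ω : Type*} [MeasurableSpace Ω] [Sub α]
    (𝓕 : Set (Measure Ω)) (A : Set α) (T : Measure Ω → α)
    (S : α → Ω → ℝ) (nrm : α → ℝ) : Prop :=
  ∀ F ∈ 𝓕, ∀ x ∈ A, ∀ z ∈ A,
    nrm (x - T F) ≤ nrm (z - T F) → escore S x F ≤ escore S z F

/-- `S` is strictly metrically `𝓕`-order-sensitive for `T` relative to the norm `nrm`. -/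
def StrictlyMetricallyOS {α Ω : Type*} [MeasurableSpace Ω] [Sub α]
    (𝓕 : Set (Measure Ω)) (A : Set α) (T : Measure Ω → α)
    (S : α → Ω → ℝ) (nrm : α → ℝ) : Prop :=
  MetricallyOS 𝓕 A T S nrm ∧
    ∀ F ∈ 𝓕, ∀ x ∈ A, ∀ z ∈ A,
      nrm (x - T F) < nrm (z - T F) → escore S x F < escore S z F

/-- `S` is `𝓕`-order-sensitive on line segments for `T`: for every unit vector `v`
(with respect to the Euclidean norm), `s ↦ S̄(T F + s • v, F)` is increasing on
`{s ∈ [0,∞) : T F + s • v ∈ A}`. -/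
def LineSegmentOS {Ω : Type*} [MeasurableSpace Ω] {k : ℕ}
    (𝓕 : Set (Measure Ω)) (A : Set (Fin k → ℝ)) (T : Measure Ω → (Fin k → ℝ))
    (S : (Fin k → ℝ) → Ω → ℝ) : Prop :=
  ∀ F ∈ 𝓕, ∀ v : Fin k → ℝ, lpNorm 2 v = 1 →
    MonotoneOn (fun s => escore S (T F + s • v) F)
      {s : ℝ | 0 ≤ s ∧ T F + s • v ∈ A}

/-- `S` is strictly `𝓕`-order-sensitive on line segments for `T`. -/
def StrictlyLineSegmentOS {Ω : Type*} [MeasurableSpace Ω] {k : ℕ}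
    (𝓕 : Set (Measure Ω)) (A : Set (Fin k → ℝ)) (T : Measure Ω → (Fin k → ℝ))
    (S : (Fin k → ℝ) → Ω → ℝ) : Prop :=
  ∀ F ∈ 𝓕, ∀ v : Fin k → ℝ, lpNorm 2 v = 1 →
    StrictMonoOn (fun s => escore S (T F + s • v) F)
      {s : ℝ | 0 ≤ s ∧ T F + s • v ∈ A}

lemma escore_mix {α Ω : Type*} [MeasurableSpace Ω] (S : α → Ω → ℝ) (x : α)
    {F G : Measure Ω} {lam : ℝ} (hlam : lam ∈ Set.Icc (0:ℝ) 1)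
    (hF : Integrable (S x) F) (hG : Integrable (S x) G) :
    escore S x (mix F G lam) = (1 - lam) * escore S x F + lam * escore S x G := by
  rw [escore, mix, integral_add_measure (hF.smul_measure ofReal_ne_top)
      (hG.smul_measure ofReal_ne_top), integral_smul_measure, integral_smul_measure,
    toReal_ofReal (sub_nonneg.mpr hlam.2), toReal_ofReal hlam.1, smul_eq_mul, smul_eq_mul,
    escore, escore]

lemma lpNorm_zero_vector {k : ℕ} {p : ℝ≥0∞} (hp : p ≠ 0) :
    _root_.lpNorm p (0 : Fin k → ℝ) = 0 := by
  unfold _root_.lpNorm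
  split_ifs with htop
  · simp
  · have : p.toReal ≠ 0 := (toReal_pos hp htop).ne'
    simp [Real.zero_rpow this, Real.zero_rpow (inv_ne_zero this)]

lemma ne_zero_of_lpNorm_eq_one {k : ℕ} {p : ℝ≥0∞} (hp : p ≠ 0) {v : Fin k → ℝ}
    (hv : _root_.lpNorm p v = 1) : v ≠ 0 := by
  rintro rfl
  simp [lpNorm_zero_vector hp] at hv

lemma add_smul_eq_affineCombination {E : Type*} [AddCommGroup E] [Module ℝ E] (a v : E)
    {s t : ℝ} (ht : t ≠ 0) : a + s • v = (1 - s / t) • a + (s / t) • (a + t • v) := by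
  rw [smul_add, smul_smul, div_mul_cancel₀ s ht, sub_smul, one_smul]
  abel

namespace StrictlyConsistent

variable {α Ω : Type*} [MeasurableSpace Ω] {𝓕 : Set (Measure Ω)} {A : Set α}
  {T : Measure Ω → α} {S : α → Ω → ℝ}

lemma escore_lt (hS : StrictlyConsistent 𝓕 A T S) {F : Measure Ω} (hF : F ∈ 𝓕) {x : α}
    (hx : x ∈ A) (hxF : x ≠ T F) : escore S (T F) F < escore S x F :=
  (hS.1 F hF x hx).lt_of_ne fun h => hxF (hS.2 F hF x hx h.symm)

/- The expected score is affine along the mixture: `x` wins strictly at the mixture and loses at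
most weakly at `G`, so it must win at `F`. -/
lemma escore_lt_of_mix (hS : StrictlyConsistent 𝓕 A T S) {F G : Measure Ω} {lam : ℝ}
    (hG : G ∈ 𝓕) (hmix : mix F G lam ∈ 𝓕) (hlam : lam ∈ Set.Ico (0:ℝ) 1)
    {x y : α} (hx : x ∈ A) (hy : y ∈ A) (hxy : x ≠ y)
    (hTmix : T (mix F G lam) = x) (hTG : T G = y)
    (hxF : Integrable (S x) F) (hxG : Integrable (S x) G)
    (hyF : Integrable (S y) F) (hyG : Integrable (S y) G) :
    escore S x F < escore S y F := by
  have hmix_lt : escore S x (mix F G lam) < escore S y (mix F G lam) := by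
    simpa only [hTmix] using hS.escore_lt hmix hy (hTmix ▸ hxy.symm)
  have hG_le : escore S y G ≤ escore S x G := by
    simpa only [hTG] using hS.1 G hG x hx
  rw [escore_mix S x (Set.Ico_subset_Icc_self hlam) hxF hxG,
    escore_mix S y (Set.Ico_subset_Icc_self hlam) hyF hyG] at hmix_lt
  have h1lam : 0 < 1 - lam := sub_pos.mpr hlam.2
  nlinarith [mul_le_mul_of_nonneg_left hG_le hlam.1]

end StrictlyConsistent

theorem statement15_general {Ω : Type*} [MeasurableSpace Ω] {k : ℕ}
    (𝓕 : Set (Measure Ω))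
    (hconv : MixConvex 𝓕)
    (A : Set (Fin k → ℝ)) (T : Measure Ω → (Fin k → ℝ))
    (hsurj : ∀ x ∈ A, ∃ F ∈ 𝓕, T F = x)
    (hlin : ∀ F ∈ 𝓕, ∀ G ∈ 𝓕, ∀ lam ∈ Set.Icc (0:ℝ) 1,
      T (mix F G lam) = (1 - lam) • T F + lam • T G)
    (S : (Fin k → ℝ) → Ω → ℝ)
    (hSint : ∀ x ∈ A, ∀ F ∈ 𝓕, Integrable (S x) F)
    (hS : StrictlyConsistent 𝓕 A T S) :
    StrictlyLineSegmentOS 𝓕 A T S := by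
  rintro F hF v hv s ⟨hs, hxA⟩ t ⟨-, hyA⟩ hst
  have ht : 0 < t := hs.trans_lt hst
  obtain ⟨G, hG, hTG⟩ := hsurj _ hyA
  have hlam : s / t ∈ Set.Ico (0:ℝ) 1 := ⟨div_nonneg hs ht.le, (div_lt_one ht).mpr hst⟩
  have hTmix : T (mix F G (s / t)) = T F + s • v := by
    rw [hlin F hF G hG _ (Set.Ico_subset_Icc_self hlam), hTG]
    exact (add_smul_eq_affineCombination _ _ ht.ne').symm
  have hne : T F + s • v ≠ T F + t • v := by
    intro h
    have h0 : (t - s) • v = 0 := by rw [sub_smul, ← add_left_cancel h, sub_self]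
    exact (smul_eq_zero.mp h0).elim (sub_ne_zero.mpr hst.ne')
      (ne_zero_of_lpNorm_eq_one two_ne_zero hv)
  exact hS.escore_lt_of_mix hG (hconv F hF G hG _ (Set.Ico_subset_Icc_self hlam)) hlam
    hxA hyA hne hTmix hTG (hSint _ hxA F hF) (hSint _ hxA G hG)
    (hSint _ hyA F hF) (hSint _ hyA G hG)

/-- If `𝓕` is convex and `T` is linear (affine in mixtures) and
surjective onto `A`, then any strictly `𝓕`-consistent scoring function for `T` is
strictly `𝓕`-order-sensitive on line segments for `T`. -/
theorem statement15 {Ω : Type*} [MeasurableSpace Ω] {k : ℕ}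
    (𝓕 : Set (Measure Ω)) (hprob : ∀ F ∈ 𝓕, IsProbabilityMeasure F)
    (hconv : MixConvex 𝓕)
    (A : Set (Fin k → ℝ)) (T : Measure Ω → (Fin k → ℝ))
    (hTA : ∀ F ∈ 𝓕, T F ∈ A)
    (hsurj : ∀ x ∈ A, ∃ F ∈ 𝓕, T F = x)
    (hlin : ∀ F ∈ 𝓕, ∀ G ∈ 𝓕, ∀ lam ∈ Set.Icc (0:ℝ) 1,
      T (mix F G lam) = (1 - lam) • T F + lam • T G)
    (S : (Fin k → ℝ) → Ω → ℝ)
    (hSint : ∀ x ∈ A, ∀ F ∈ 𝓕, Integrable (S x) F)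
    (hS : StrictlyConsistent 𝓕 A T S) :
    StrictlyLineSegmentOS 𝓕 A T S :=
  statement15_general 𝓕 hconv A T hsurj hlin S hSint hS
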